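/- arXiv:2406.02124 — 6 statements merged into one kernel-verified Lean document; each statement's English description precedes it below -/
import Mathlib

section
/- If F ≤_disp G for cumulative distribution functions F and G (i.e., F⁻¹(q) - F⁻¹(p) ≤ G⁻¹(q) - G⁻¹(p) for all 0 < p ≤ q < 1, where F⁻¹ denotes the left-continuous quantile function), then the range of F on D_F = {t : 0 < F(t) < 1} is a subset of the range of G on D_G. -/
open Filter

/-- Left-continuous quantile function of a cdf. -/
noncomputable def quantile (F : ℝ → ℝ) (p : ℝ) : ℝ := sInf {t : ℝ | p ≤ F t}

lemma cdf_aux (H : ℝ → ℝ) (hmono : Monotone H)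
    (hrc : ∀ t : ℝ, ContinuousWithinAt H (Set.Ici t) t)
    (h0 : Tendsto H atBot (nhds 0)) (h1 : Tendsto H atTop (nhds 1))
    {p : ℝ} (hp : 0 < p) (hp1 : p < 1) :
    {t : ℝ | p ≤ H t}.Nonempty ∧ BddBelow {t : ℝ | p ≤ H t} ∧
      p ≤ H (quantile H p) := by
  have hne : {t : ℝ | p ≤ H t}.Nonempty := by
    obtain ⟨a, ha⟩ := (h1.eventually (eventually_gt_nhds hp1)).exists
    exact ⟨a, le_of_lt ha⟩
  have hbdd : BddBelow {t : ℝ | p ≤ H t} := by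
    obtain ⟨a, ha⟩ := eventually_atBot.mp (h0.eventually (eventually_lt_nhds hp))
    refine ⟨a, fun u hu => ?_⟩
    by_contra hcon
    push_neg at hcon
    exact absurd hu (not_le.2 (ha u hcon.le))
  refine ⟨hne, hbdd, ?_⟩
  set s := quantile H p with hs
  have key : ∀ u ∈ Set.Ioi s, p ≤ H u := by
    intro u hu
    obtain ⟨v, hv, hvu⟩ := exists_lt_of_csInf_lt hne hu
    exact le_trans hv (hmono hvu.le)
  have htend : Tendsto H (nhdsWithin s (Set.Ioi s)) (nhds (H s)) :=
    (hrc s).mono_left (nhdsWithin_mono s Set.Ioi_subset_Ici_self)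
  exact ge_of_tendsto htend
    (Filter.eventually_iff_exists_mem.2 ⟨Set.Ioi s, self_mem_nhdsWithin, key⟩)

/-- If `F ≤_disp G` for cdf's `F` and `G`, then `F(D_F) ⊆ G(D_G)`. -/
theorem stmt_0 (F G : ℝ → ℝ)
    (hFmono : Monotone F) (hGmono : Monotone G)
    (hFrc : ∀ t : ℝ, ContinuousWithinAt F (Set.Ici t) t)
    (hGrc : ∀ t : ℝ, ContinuousWithinAt G (Set.Ici t) t)
    (hF0 : Tendsto F atBot (nhds 0)) (hF1 : Tendsto F atTop (nhds 1))
    (hG0 : Tendsto G atBot (nhds 0)) (hG1 : Tendsto G atTop (nhds 1))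
    (hdisp : ∀ p q : ℝ, 0 < p → p ≤ q → q < 1 →
      quantile F q - quantile F p ≤ quantile G q - quantile G p) :
    F '' {t : ℝ | F t ∈ Set.Ioo 0 1} ⊆ G '' {t : ℝ | G t ∈ Set.Ioo 0 1} := by
  rintro y ⟨t, ht, rfl⟩
  obtain ⟨hp0, hp1⟩ := ht
  set p := F t with hpdef
  obtain ⟨hGne, hGbdd, hGge⟩ := cdf_aux G hGmono hGrc hG0 hG1 hp0 hp1
  obtain ⟨hFne, hFbdd, hFge⟩ := cdf_aux F hFmono hFrc hF0 hF1 hp0 hp1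
  set s := quantile G p with hsdef
  -- If G s = p we are done; otherwise derive a contradiction.
  rcases eq_or_lt_of_le hGge with heq | hlt
  · exact ⟨s, by constructor <;> [exact hp0.trans_le heq.le; exact heq.symm ▸ hp1], heq.symm⟩
  exfalso
  -- pick q strictly between p and min (G s) 1
  set q := min ((p + G s) / 2) ((p + 1) / 2) with hqdef
  have hpq : p < q := by
    apply lt_min <;> linarith
  have hqGs : q < G s := min_lt_of_left_lt (by linarith)
  have hq1 : q < 1 := min_lt_of_right_lt (by linarith)
  -- quantile G q = s
  have hsubset : {u : ℝ | q ≤ G u} ⊆ {u : ℝ | p ≤ G u} := fun u hu => hpq.le.trans hu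
  have hGqbdd : BddBelow {u : ℝ | q ≤ G u} := hGbdd.mono hsubset
  have hGq : quantile G q = s := by
    apply le_antisymm
    · exact csInf_le hGqbdd (show s ∈ {u : ℝ | q ≤ G u} from hqGs.le)
    · exact le_csInf ⟨s, hqGs.le⟩ fun u hu => csInf_le hGbdd (hsubset hu)
  -- quantile F p ≤ t and F (quantile F p) = p
  have hxt : quantile F p ≤ t := csInf_le hFbdd (Set.mem_setOf.2 le_rfl)
  have hFx : F (quantile F p) = p := le_antisymm ((hFmono hxt).trans le_rfl) hFge
  -- quantile F q > quantile F p
  have hFqne : {u : ℝ | q ≤ F u}.Nonempty := by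
    obtain ⟨a, ha⟩ := (hF1.eventually (eventually_gt_nhds hq1)).exists
    exact ⟨a, ha.le⟩
  have hFqbdd : BddBelow {u : ℝ | q ≤ F u} :=
    hFbdd.mono (fun u hu => Set.mem_setOf.2 (hpq.le.trans hu))
  have hFqge : q ≤ F (quantile F q) := by
    have key : ∀ u ∈ Set.Ioi (quantile F q), q ≤ F u := by
      intro u hu
      obtain ⟨v, hv, hvu⟩ := exists_lt_of_csInf_lt hFqne hu
      exact le_trans hv (hFmono hvu.le)
    have htend : Tendsto F (nhdsWithin (quantile F q) (Set.Ioi (quantile F q)))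
        (nhds (F (quantile F q))) :=
      (hFrc _).mono_left (nhdsWithin_mono _ Set.Ioi_subset_Ici_self)
    exact ge_of_tendsto htend
      (Filter.eventually_iff_exists_mem.2 ⟨_, self_mem_nhdsWithin, key⟩)
  have hstrict : quantile F p < quantile F q := by
    have hle : quantile F p ≤ quantile F q :=
      le_csInf hFqne fun u hu => csInf_le hFbdd (Set.mem_setOf.2 (hpq.le.trans hu))
    rcases eq_or_lt_of_le hle with heq2 | h
    · exfalso
      rw [← heq2, hFx] at hFqge
      exact absurd hFqge (not_le.2 hpq)
    · exact h
  have := hdisp p q hp0 hpq.le hq1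
  rw [hGq] at this
  linarith
end

section
/- For integrable real random variables X and Y, F ≤_dil G holds if and only if π_{X-E[X]}(t) ≤ π_{Y-E[Y]}(t) for all t ∈ ℝ, where π_Z(t) = E[(Z - t)₊] is the stop-loss transform. -/
/-!
The converse direction is the case `φ = (· - t)₊`. For the direct one, let `g` be a monotone
subgradient of the convex `φ` (its right derivative). The piecewise-linear minorant of `φ` with
slope `g (k / (n + 1))` on `[k / (n + 1), (k + 1) / (n + 1)]`, mirrored for `x ≤ 0`, is an affine
function plus a nonnegative combination of hinges `(x - s)₊` and `(-s - x)₊`. By put-call parity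
and equal means, ordered stop-loss transforms order the expectations of both kinds of hinges,
hence of the minorants. The minorants lie between `φ` and its tangent at `0` and converge to `φ`
pointwise, with error at most `|g x - g 0| / (n + 1)` at `x`, so dominated convergence passes the
inequality to `φ`.
-/

open MeasureTheory Filter Finset Set Topology

def IsSubgradient (φ g : ℝ → ℝ) : Prop := ∀ x y, φ x + g x * (y - x) ≤ φ y

namespace IsSubgradient

variable {φ g : ℝ → ℝ}

theorem monotone (hφ : IsSubgradient φ g) : Monotone g := by
  intro x y hxy
  rcases hxy.eq_or_lt with rfl | hlt
  · exact le_rfl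
  · by_contra! hgt
    nlinarith [hφ x y, hφ y x, mul_pos (sub_pos.mpr hgt) (sub_pos.mpr hlt)]

theorem comp_neg (hφ : IsSubgradient φ g) :
    IsSubgradient (fun y => φ (-y)) (fun y => -g (-y)) := fun x y => by
  linarith [hφ (-x) (-y)]

theorem sub_sub_le (hφ : IsSubgradient φ g) (x y : ℝ) :
    φ y - φ x - g x * (y - x) ≤ (g y - g x) * (y - x) := by
  linarith [hφ y x]

end IsSubgradient

theorem ConvexOn.exists_isSubgradient {φ : ℝ → ℝ} (hφ : ConvexOn ℝ univ φ) :
    ∃ g, IsSubgradient φ g := by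
  refine ⟨fun x => derivWithin φ (Ioi x) x, fun x y => ?_⟩
  rcases lt_trichotomy x y with hxy | rfl | hyx
  · have := hφ.rightDeriv_le_slope_of_mem_interior (by simp) (mem_univ y) hxy
    rw [slope_def_field, le_div_iff₀ (sub_pos.mpr hxy)] at this
    linarith
  · simp
  · have hle := (hφ.slope_le_leftDeriv_of_mem_interior (mem_univ y) (by simp) hyx).trans
      (hφ.leftDeriv_le_rightDeriv_of_mem_interior (by simp))
    rw [slope_def_field, div_le_iff₀ (sub_pos.mpr hyx)] at hle
    linarith

/-- Piecewise linear, with slope `g (t k)` on `[t k, t (k + 1)]`. -/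
noncomputable def lowerApprox (φ g : ℝ → ℝ) (t : ℕ → ℝ) (m : ℕ) (x : ℝ) : ℝ :=
  φ (t 0) + g (t 0) * (x - t 0)
    + ∑ k ∈ range m, (g (t (k + 1)) - g (t k)) * max (x - t (k + 1)) 0

section LowerApprox

variable {φ g : ℝ → ℝ} {t : ℕ → ℝ} {m : ℕ} {x : ℝ}

theorem lowerApprox_succ (φ g : ℝ → ℝ) (t : ℕ → ℝ) (m : ℕ) (x : ℝ) :
    lowerApprox φ g t (m + 1) x =
      lowerApprox φ g t m x + (g (t (m + 1)) - g (t m)) * max (x - t (m + 1)) 0 := by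
  simp only [lowerApprox, sum_range_succ]
  ring

theorem lowerApprox_succ_of_le (hx : x ≤ t (m + 1)) :
    lowerApprox φ g t (m + 1) x = lowerApprox φ g t m x := by
  rw [lowerApprox_succ, max_eq_right (by linarith), mul_zero, add_zero]

theorem lowerApprox_of_le_head (ht : Monotone t) (hx : x ≤ t 0) :
    lowerApprox φ g t m x = φ (t 0) + g (t 0) * (x - t 0) := by
  induction m with
  | zero => simp [lowerApprox]
  | succ m ih => rw [lowerApprox_succ_of_le (hx.trans (ht (Nat.zero_le _))), ih]

theorem lowerApprox_of_last_le (ht : Monotone t) (hx : t m ≤ x) :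
    lowerApprox φ g t m x = lowerApprox φ g t m (t m) + g (t m) * (x - t m) := by
  induction m generalizing x with
  | zero => simp only [lowerApprox, range_zero, sum_empty]; ring
  | succ m ih =>
    have hm : t m ≤ t (m + 1) := ht m.le_succ
    rw [lowerApprox_succ, lowerApprox_succ, ih (hm.trans hx), ih hm, max_eq_left (by linarith),
      sub_self, max_self]
    ring

theorem tangent_le_lowerApprox (hg : Monotone g) (ht : Monotone t) :
    φ (t 0) + g (t 0) * (x - t 0) ≤ lowerApprox φ g t m x :=
  le_add_of_nonneg_right <| sum_nonneg fun k _ =>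
    mul_nonneg (sub_nonneg.mpr (hg (ht k.le_succ))) (le_max_right _ _)

theorem IsSubgradient.lowerApprox_le (hφ : IsSubgradient φ g) (ht : Monotone t) :
    lowerApprox φ g t m x ≤ φ x := by
  induction m generalizing x with
  | zero => simpa [lowerApprox] using hφ (t 0) x
  | succ m ih =>
    rcases le_total x (t (m + 1)) with hx | hx
    · rw [lowerApprox_succ_of_le hx]
      exact ih
    · rw [lowerApprox_of_last_le ht hx, lowerApprox_succ_of_le le_rfl]
      linarith [hφ (t (m + 1)) x, @ih (t (m + 1))]

theorem IsSubgradient.sub_lowerApprox_le (hφ : IsSubgradient φ g) (ht : Monotone t) {h : ℝ}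
    (hmesh : ∀ k, t (k + 1) - t k ≤ h) (hx₀ : t 0 ≤ x) (hxm : x ≤ t m) :
    φ x - lowerApprox φ g t m x ≤ (g x - g (t 0)) * h := by
  induction m generalizing x with
  | zero =>
    obtain rfl := le_antisymm hxm hx₀
    simp [lowerApprox]
  | succ m ih =>
    rw [lowerApprox_succ_of_le hxm]
    rcases le_total x (t m) with hx | hx
    · exact ih hx₀ hx
    · have hgx : g (t m) ≤ g x := hφ.monotone hx
      have hstep : (g x - g (t m)) * (x - t m) ≤ (g x - g (t m)) * h :=
        mul_le_mul_of_nonneg_left (by linarith [hmesh m]) (sub_nonneg.mpr hgx)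
      rw [lowerApprox_of_last_le ht hx]
      linarith [hφ.sub_sub_le (t m) x, ih (ht (Nat.zero_le m)) le_rfl]

end LowerApprox

noncomputable def grid (n k : ℕ) : ℝ := k / (n + 1)

theorem grid_monotone (n : ℕ) : Monotone (grid n) := fun a b hab => by
  unfold grid; gcongr

theorem grid_zero (n : ℕ) : grid n 0 = 0 := by simp [grid]

theorem grid_succ_sub (n k : ℕ) : grid n (k + 1) - grid n k = 1 / (n + 1) := by
  simp only [grid]; push_cast; ring

theorem grid_sq (n : ℕ) : grid n ((n + 1) ^ 2) = n + 1 := by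
  simp only [grid]; push_cast; field_simp

/-- `lowerApprox` on the grid for `x ≥ 0`, glued at `0` with its mirror image for `x ≤ 0`. -/
noncomputable def symmLowerApprox (φ g : ℝ → ℝ) (n : ℕ) (x : ℝ) : ℝ :=
  lowerApprox φ g (grid n) ((n + 1) ^ 2) x
    + lowerApprox (fun y => φ (-y)) (fun y => -g (-y)) (grid n) ((n + 1) ^ 2) (-x)
    - (φ 0 + g 0 * x)

section SymmLowerApprox

variable {φ g : ℝ → ℝ} {n : ℕ} {x : ℝ}

theorem symmLowerApprox_of_nonneg (hx : 0 ≤ x) :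
    symmLowerApprox φ g n x = lowerApprox φ g (grid n) ((n + 1) ^ 2) x := by
  rw [symmLowerApprox,
    lowerApprox_of_le_head (x := -x) (grid_monotone n) (by rw [grid_zero]; linarith), grid_zero]
  simp only [neg_zero]
  ring

theorem symmLowerApprox_of_nonpos (hx : x ≤ 0) :
    symmLowerApprox φ g n x =
      lowerApprox (fun y => φ (-y)) (fun y => -g (-y)) (grid n) ((n + 1) ^ 2) (-x) := by
  rw [symmLowerApprox, lowerApprox_of_le_head (grid_monotone n) (by rwa [grid_zero]), grid_zero]
  ring

theorem IsSubgradient.tangent_le_symmLowerApprox (hφ : IsSubgradient φ g) :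
    φ 0 + g 0 * x ≤ symmLowerApprox φ g n x := by
  have h₁ := tangent_le_lowerApprox (φ := φ) (m := (n + 1) ^ 2) (x := x)
    hφ.monotone (grid_monotone n)
  have h₂ := tangent_le_lowerApprox (φ := fun y => φ (-y)) (m := (n + 1) ^ 2) (x := -x)
    hφ.comp_neg.monotone (grid_monotone n)
  simp only [grid_zero, neg_zero] at h₁ h₂
  rw [symmLowerApprox]
  linarith

theorem IsSubgradient.symmLowerApprox_le (hφ : IsSubgradient φ g) :
    symmLowerApprox φ g n x ≤ φ x := by
  rcases le_total 0 x with hx | hx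
  · rw [symmLowerApprox_of_nonneg hx]
    exact hφ.lowerApprox_le (grid_monotone n)
  · rw [symmLowerApprox_of_nonpos hx]
    simpa using hφ.comp_neg.lowerApprox_le (grid_monotone n) (m := (n + 1) ^ 2) (x := -x)

theorem IsSubgradient.tendsto_lowerApprox (hφ : IsSubgradient φ g) (hx : 0 ≤ x) :
    Tendsto (fun n => lowerApprox φ g (grid n) ((n + 1) ^ 2) x) atTop (𝓝 (φ x)) := by
  have hlower : ∀ᶠ n : ℕ in atTop,
      φ x - (g x - g 0) * (1 / (n + 1)) ≤ lowerApprox φ g (grid n) ((n + 1) ^ 2) x := by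
    filter_upwards [eventually_ge_atTop ⌈x⌉₊] with n hn
    have hxn : x ≤ grid n ((n + 1) ^ 2) := by
      rw [grid_sq]
      linarith [Nat.ceil_le.mp hn]
    have := hφ.sub_lowerApprox_le (grid_monotone n) (fun k => (grid_succ_sub n k).le)
      (by rwa [grid_zero]) hxn
    rw [grid_zero] at this
    linarith
  have hlim : Tendsto (fun n : ℕ => φ x - (g x - g 0) * (1 / (n + 1))) atTop (𝓝 (φ x)) := by
    simpa using tendsto_const_nhds.sub
      (tendsto_one_div_add_atTop_nhds_zero_nat.const_mul (g x - g 0))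
  exact tendsto_of_tendsto_of_tendsto_of_le_of_le' hlim tendsto_const_nhds hlower
    (Eventually.of_forall fun n => hφ.lowerApprox_le (grid_monotone n))

theorem IsSubgradient.tendsto_symmLowerApprox (hφ : IsSubgradient φ g) (x : ℝ) :
    Tendsto (fun n => symmLowerApprox φ g n x) atTop (𝓝 (φ x)) := by
  rcases le_total 0 x with hx | hx
  · simpa only [symmLowerApprox_of_nonneg hx] using hφ.tendsto_lowerApprox hx
  · simpa only [symmLowerApprox_of_nonpos hx, neg_neg] using
      hφ.comp_neg.tendsto_lowerApprox (neg_nonneg.mpr hx)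

end SymmLowerApprox

section StopLoss

variable {Ω : Type*} [MeasurableSpace Ω] {μ : Measure Ω} [IsFiniteMeasure μ] {Z W : Ω → ℝ}

noncomputable def stopLoss (μ : Measure Ω) (Z : Ω → ℝ) (t : ℝ) : ℝ := ∫ ω, max (Z ω - t) 0 ∂μ

theorem integral_affine_comp_eq (hZ : Integrable Z μ) (hW : Integrable W μ)
    (hmean : ∫ ω, Z ω ∂μ = ∫ ω, W ω ∂μ) (a b c : ℝ) :
    ∫ ω, (a + b * (Z ω - c)) ∂μ = ∫ ω, (a + b * (W ω - c)) ∂μ := by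
  have key : ∀ V : Ω → ℝ, Integrable V μ →
      ∫ ω, (a + b * (V ω - c)) ∂μ = ∫ _, a ∂μ + b * (∫ ω, V ω ∂μ - ∫ _, c ∂μ) := fun V hV => by
    rw [integral_add (integrable_const a) (by fun_prop), integral_const_mul,
      integral_sub hV (integrable_const c)]
  rw [key Z hZ, key W hW, hmean]

/-- Put-call parity: `(-z - t)₊ = (z + t)₊ - (z + t)`. -/
theorem stopLoss_neg (hZ : Integrable Z μ) (t : ℝ) :
    stopLoss μ (fun ω => -Z ω) t = stopLoss μ Z (-t) - ∫ ω, (Z ω + t) ∂μ := by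
  have hpt : ∀ z : ℝ, max (-z - t) 0 = max (z - -t) 0 - (z + t) := fun z => by
    have := max_zero_sub_max_neg_zero_eq_self (z + t)
    rw [sub_neg_eq_add, neg_add'] at *
    linarith
  simp only [stopLoss, hpt]
  exact integral_sub (by fun_prop) (by fun_prop)

theorem stopLoss_neg_le (hZ : Integrable Z μ) (hW : Integrable W μ)
    (hmean : ∫ ω, Z ω ∂μ = ∫ ω, W ω ∂μ) (hsl : ∀ t, stopLoss μ Z t ≤ stopLoss μ W t) (t : ℝ) :
    stopLoss μ (fun ω => -Z ω) t ≤ stopLoss μ (fun ω => -W ω) t := by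
  have hshift : ∫ ω, (Z ω + t) ∂μ = ∫ ω, (W ω + t) ∂μ := by
    rw [integral_add hZ (integrable_const t), integral_add hW (integrable_const t), hmean]
  rw [stopLoss_neg hZ, stopLoss_neg hW, hshift]
  linarith [hsl (-t)]

variable {φ g : ℝ → ℝ} {t : ℕ → ℝ}

@[fun_prop]
theorem MeasureTheory.Integrable.lowerApprox_comp (hZ : Integrable Z μ) (m : ℕ) :
    Integrable (fun ω => lowerApprox φ g t m (Z ω)) μ := by
  unfold lowerApprox
  fun_prop

theorem integral_lowerApprox_comp (hZ : Integrable Z μ) (m : ℕ) :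
    ∫ ω, lowerApprox φ g t m (Z ω) ∂μ = ∫ ω, (φ (t 0) + g (t 0) * (Z ω - t 0)) ∂μ
      + ∑ k ∈ range m, (g (t (k + 1)) - g (t k)) * stopLoss μ Z (t (k + 1)) := by
  simp only [lowerApprox, stopLoss, ← integral_const_mul]
  rw [integral_add (by fun_prop) (by fun_prop), integral_finsetSum _ fun k _ => by fun_prop]

theorem integral_lowerApprox_comp_le (hg : Monotone g) (ht : Monotone t)
    (hZ : Integrable Z μ) (hW : Integrable W μ)
    (hmean : ∫ ω, Z ω ∂μ = ∫ ω, W ω ∂μ) (hsl : ∀ t, stopLoss μ Z t ≤ stopLoss μ W t) (m : ℕ) :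
    ∫ ω, lowerApprox φ g t m (Z ω) ∂μ ≤ ∫ ω, lowerApprox φ g t m (W ω) ∂μ := by
  rw [integral_lowerApprox_comp hZ, integral_lowerApprox_comp hW,
    integral_affine_comp_eq hZ hW hmean]
  gcongr with k
  exacts [sub_nonneg.mpr (hg (ht k.le_succ)), hsl _]

@[fun_prop]
theorem MeasureTheory.Integrable.symmLowerApprox_comp (hZ : Integrable Z μ) (n : ℕ) :
    Integrable (fun ω => symmLowerApprox φ g n (Z ω)) μ := by
  unfold symmLowerApprox
  fun_prop

theorem IsSubgradient.integral_symmLowerApprox_comp_le (hφ : IsSubgradient φ g)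
    (hZ : Integrable Z μ) (hW : Integrable W μ)
    (hmean : ∫ ω, Z ω ∂μ = ∫ ω, W ω ∂μ) (hsl : ∀ t, stopLoss μ Z t ≤ stopLoss μ W t) (n : ℕ) :
    ∫ ω, symmLowerApprox φ g n (Z ω) ∂μ ≤ ∫ ω, symmLowerApprox φ g n (W ω) ∂μ := by
  have hmean_neg : ∫ ω, -Z ω ∂μ = ∫ ω, -W ω ∂μ := by rw [integral_neg, integral_neg, hmean]
  have htangent : ∫ ω, (φ 0 + g 0 * Z ω) ∂μ = ∫ ω, (φ 0 + g 0 * W ω) ∂μ := by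
    simpa using integral_affine_comp_eq hZ hW hmean (φ 0) (g 0) 0
  have key : ∀ V : Ω → ℝ, Integrable V μ → ∫ ω, symmLowerApprox φ g n (V ω) ∂μ =
      ∫ ω, lowerApprox φ g (grid n) ((n + 1) ^ 2) (V ω) ∂μ
        + ∫ ω, lowerApprox (fun y => φ (-y)) (fun y => -g (-y)) (grid n) ((n + 1) ^ 2) (-V ω) ∂μ
        - ∫ ω, (φ 0 + g 0 * V ω) ∂μ := fun V hV => by
    simp only [symmLowerApprox]
    rw [integral_sub (by fun_prop) (by fun_prop), integral_add (by fun_prop) (by fun_prop)]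
  rw [key Z hZ, key W hW, htangent]
  gcongr ?_ + ?_ - _
  · exact integral_lowerApprox_comp_le hφ.monotone (grid_monotone n) hZ hW hmean hsl _
  · exact integral_lowerApprox_comp_le hφ.comp_neg.monotone (grid_monotone n) hZ.neg hW.neg
      hmean_neg (stopLoss_neg_le hZ hW hmean hsl) _

theorem IsSubgradient.tendsto_integral_symmLowerApprox_comp (hφ : IsSubgradient φ g)
    (hZ : Integrable Z μ) (hφZ : Integrable (fun ω => φ (Z ω)) μ) :
    Tendsto (fun n => ∫ ω, symmLowerApprox φ g n (Z ω) ∂μ) atTop (𝓝 (∫ ω, φ (Z ω) ∂μ)) := by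
  refine tendsto_integral_of_dominated_convergence
    (fun ω => |φ 0 + g 0 * Z ω| + |φ (Z ω)|)
    (fun n => (hZ.symmLowerApprox_comp n).aestronglyMeasurable)
    ((Integrable.abs (by fun_prop)).add hφZ.abs) (fun n => ae_of_all _ fun ω => ?_)
    (ae_of_all _ fun ω => hφ.tendsto_symmLowerApprox (Z ω))
  rw [Real.norm_eq_abs]
  exact (abs_le_max_abs_abs hφ.tangent_le_symmLowerApprox hφ.symmLowerApprox_le).trans
    (max_le_add_of_nonneg (abs_nonneg _) (abs_nonneg _))

theorem ConvexOn.integral_comp_le_of_stopLoss_le (hφ : ConvexOn ℝ univ φ)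
    (hZ : Integrable Z μ) (hW : Integrable W μ)
    (hmean : ∫ ω, Z ω ∂μ = ∫ ω, W ω ∂μ) (hsl : ∀ t, stopLoss μ Z t ≤ stopLoss μ W t)
    (hφZ : Integrable (fun ω => φ (Z ω)) μ) (hφW : Integrable (fun ω => φ (W ω)) μ) :
    ∫ ω, φ (Z ω) ∂μ ≤ ∫ ω, φ (W ω) ∂μ := by
  obtain ⟨g, hg⟩ := hφ.exists_isSubgradient
  exact le_of_tendsto_of_tendsto' (hg.tendsto_integral_symmLowerApprox_comp hZ hφZ)
    (hg.tendsto_integral_symmLowerApprox_comp hW hφW)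
    (hg.integral_symmLowerApprox_comp_le hZ hW hmean hsl)

end StopLoss

theorem convexOn_max_sub_zero (t : ℝ) : ConvexOn ℝ univ fun x : ℝ => max (x - t) 0 :=
  ((convexOn_id convex_univ).sub (concaveOn_const t convex_univ)).sup
    (convexOn_const 0 convex_univ)

/-- The dilation order `F ≤_dil G` holds iff the stop-loss transforms of the
centered variables are pointwise ordered. -/
theorem stmt_3 {Ω : Type*} [MeasurableSpace Ω] (μ : Measure Ω)
    [IsProbabilityMeasure μ] (X Y : Ω → ℝ)
    (hX : Integrable X μ) (hY : Integrable Y μ) :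
    (∀ φ : ℝ → ℝ, ConvexOn ℝ Set.univ φ →
      Integrable (fun ω => φ (X ω - ∫ ω', X ω' ∂μ)) μ →
      Integrable (fun ω => φ (Y ω - ∫ ω', Y ω' ∂μ)) μ →
      ∫ ω, φ (X ω - ∫ ω', X ω' ∂μ) ∂μ ≤ ∫ ω, φ (Y ω - ∫ ω', Y ω' ∂μ) ∂μ)
    ↔
    (∀ t : ℝ, ∫ ω, max (X ω - (∫ ω', X ω' ∂μ) - t) 0 ∂μ ≤
        ∫ ω, max (Y ω - (∫ ω', Y ω' ∂μ) - t) 0 ∂μ) := by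
  constructor
  · exact fun h t => h _ (convexOn_max_sub_zero t) (by fun_prop) (by fun_prop)
  · intro hsl φ hφ
    refine hφ.integral_comp_le_of_stopLoss_le (by fun_prop) (by fun_prop) ?_ hsl
    simp [integral_sub hX (integrable_const _), integral_sub hY (integrable_const _)]
end

section
/- For real random variables X and Y with finite means, if F ≤_disp G then F ≤_dil G, where F and G are the distributions of X and Y. -/
/-!
Realise both laws on `(0, 1)` with Lebesgue measure through their quantile functions
`F⁻¹` and `G⁻¹` (the comonotone coupling). After centring, `a = F⁻¹ - E X` is nondecreasing,
and by the dispersive order so is `c = (G⁻¹ - E Y) - a`, which moreover has integral zero.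
With `r` the right derivative of `φ`, the supporting line gives `φ (a + c) ≥ φ a + r(a) c`.
Since `r ∘ a` is nondecreasing and `c` changes sign only once, `r(a) c ≥ K c` for a constant `K`
read off at the sign change (if `c` has constant sign, it vanishes a.e.), and `∫ K c = 0`.
-/

open MeasureTheory

open ProbabilityTheory Set Filter Topology

lemma ConvexOn.add_rightDeriv_mul_sub_le {S : Set ℝ} {f : ℝ → ℝ} (hf : ConvexOn ℝ S f)
    {x y : ℝ} (hx : x ∈ interior S) (hy : y ∈ S) :
    f x + derivWithin f (Ioi x) x * (y - x) ≤ f y := by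
  rcases lt_trichotomy x y with hxy | rfl | hxy
  · have h := hf.rightDeriv_le_slope_of_mem_interior hx hy hxy
    rw [slope_def_field, le_div_iff₀ (sub_pos.2 hxy)] at h
    linarith
  · simp
  · have h₁ := hf.slope_le_leftDeriv_of_mem_interior hy hx hxy
    rw [slope_def_field, div_le_iff₀ (sub_pos.2 hxy)] at h₁
    have h₂ := mul_le_mul_of_nonneg_right (hf.leftDeriv_le_rightDeriv_of_mem_interior hx)
      (sub_pos.2 hxy).le
    linarith

lemma exists_mul_le_mul_of_monotoneOn {α : Type*} [LinearOrder α] {s : Set α} {g c : α → ℝ}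
    (hg : MonotoneOn g s) (hc : MonotoneOn c s) {p₀ p₁ : α} (hp₀ : p₀ ∈ s) (hc₀ : c p₀ ≤ 0)
    (hp₁ : p₁ ∈ s) (hc₁ : 0 < c p₁) :
    ∃ K, ∀ p ∈ s, K * c p ≤ g p * c p := by
  have hle : ∀ p ∈ s, ∀ q ∈ s, c p ≤ 0 → 0 < c q → p ≤ q := fun p hp q hq hcp hcq =>
    le_of_not_gt fun hqp => (hcq.trans_le (hc hq hp hqp.le)).not_ge hcp
  have hbdd : BddBelow (g '' {q ∈ s | 0 < c q}) := by
    refine ⟨g p₀, ?_⟩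
    rintro _ ⟨q, ⟨hq, hcq⟩, rfl⟩
    exact hg hp₀ hq (hle p₀ hp₀ q hq hc₀ hcq)
  refine ⟨sInf (g '' {q ∈ s | 0 < c q}), fun p hp => ?_⟩
  rcases le_or_gt (c p) 0 with hcp | hcp
  · refine mul_le_mul_of_nonpos_right (le_csInf ⟨_, p₁, ⟨hp₁, hc₁⟩, rfl⟩ ?_) hcp
    rintro _ ⟨q, ⟨hq, hcq⟩, rfl⟩
    exact hg hp hq (hle p hp q hq hcp hcq)
  · exact mul_le_mul_of_nonneg_right (csInf_le hbdd ⟨p, ⟨hp, hcp⟩, rfl⟩) hcp.le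

lemma ae_restrict_eq_zero_of_setIntegral_eq_zero {α : Type*} [MeasurableSpace α] {μ : Measure α}
    {s : Set α} (hs : MeasurableSet s) {c : α → ℝ} (hci : IntegrableOn c s μ)
    (hc0 : ∫ p in s, c p ∂μ = 0) (hsign : (∀ p ∈ s, 0 ≤ c p) ∨ ∀ p ∈ s, c p ≤ 0) :
    c =ᵐ[μ.restrict s] 0 := by
  rcases hsign with hnn | hnp
  · exact (integral_eq_zero_iff_of_nonneg_ae (ae_restrict_of_forall_mem hs hnn) hci).mp hc0
  · have h := (integral_eq_zero_iff_of_nonneg_ae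
      (ae_restrict_of_forall_mem hs fun p hp => neg_nonneg.2 (hnp p hp)) hci.neg).mp
      (by rw [integral_neg, hc0, neg_zero])
    filter_upwards [h] with p hp
    simpa using hp

lemma exists_ae_mul_le_mul_of_monotoneOn {α : Type*} [LinearOrder α] [MeasurableSpace α]
    {μ : Measure α} {s : Set α} (hs : MeasurableSet s) {g c : α → ℝ} (hg : MonotoneOn g s)
    (hc : MonotoneOn c s) (hci : IntegrableOn c s μ) (hc0 : ∫ p in s, c p ∂μ = 0) :
    ∃ K, ∀ᵐ p ∂μ.restrict s, K * c p ≤ g p * c p := by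
  by_cases hchange : (∃ p ∈ s, c p ≤ 0) ∧ ∃ p ∈ s, 0 < c p
  · obtain ⟨⟨p₀, hp₀, hc₀⟩, p₁, hp₁, hc₁⟩ := hchange
    obtain ⟨K, hK⟩ := exists_mul_le_mul_of_monotoneOn hg hc hp₀ hc₀ hp₁ hc₁
    exact ⟨K, ae_restrict_of_forall_mem hs hK⟩
  · have hsign : (∀ p ∈ s, 0 ≤ c p) ∨ ∀ p ∈ s, c p ≤ 0 := by
      by_contra! h
      obtain ⟨⟨p, hp, hcp⟩, q, hq, hcq⟩ := h
      exact hchange ⟨⟨p, hp, hcp.le⟩, q, hq, hcq⟩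
    refine ⟨0, ?_⟩
    filter_upwards [ae_restrict_eq_zero_of_setIntegral_eq_zero hs hci hc0 hsign] with p hp
    simp [hp]

theorem ConvexOn.setIntegral_comp_le_of_monotoneOn_sub {φ : ℝ → ℝ} (hφ : ConvexOn ℝ univ φ)
    {α : Type*} [LinearOrder α] [MeasurableSpace α] {μ : Measure α} {s : Set α}
    (hs : MeasurableSet s) {a b : α → ℝ} (ha : MonotoneOn a s) (hba : MonotoneOn (b - a) s)
    (hai : IntegrableOn a s μ) (hbi : IntegrableOn b s μ)
    (hab : ∫ p in s, a p ∂μ = ∫ p in s, b p ∂μ)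
    (hφa : IntegrableOn (fun p => φ (a p)) s μ) (hφb : IntegrableOn (fun p => φ (b p)) s μ) :
    ∫ p in s, φ (a p) ∂μ ≤ ∫ p in s, φ (b p) ∂μ := by
  have hr : Monotone fun x => derivWithin φ (Ioi x) x := by
    simpa using hφ.monotoneOn_rightDeriv
  have hci : IntegrableOn (b - a) s μ := hbi.sub hai
  have hc0 : ∫ p in s, (b - a) p ∂μ = 0 := by
    rw [Pi.sub_def, integral_sub hbi hai, hab, sub_self]
  obtain ⟨K, hK⟩ := exists_ae_mul_le_mul_of_monotoneOn hs (hr.comp_monotoneOn ha) hba hci hc0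
  calc ∫ p in s, φ (a p) ∂μ = ∫ p in s, (φ (a p) + K * (b - a) p) ∂μ := by
        rw [integral_add hφa (hci.const_mul K), integral_const_mul, hc0, mul_zero, add_zero]
    _ ≤ ∫ p in s, φ (b p) ∂μ := by
        refine integral_mono_ae (hφa.add (hci.const_mul K)) hφb ?_
        filter_upwards [hK] with p hp
        have := hφ.add_rightDeriv_mul_sub_le (x := a p) (y := b p) (by simp) trivial
        simp only [Pi.sub_apply, Function.comp_apply] at hp ⊢
        linarith

lemma StieltjesFunction.quantile_le_iff (f : StieltjesFunction ℝ) {p : ℝ}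
    (hlo : ∃ t, f t < p) (hhi : ∃ t, p ≤ f t) (t : ℝ) :
    quantile f p ≤ t ↔ p ≤ f t := by
  obtain ⟨t₀, ht₀⟩ := hlo
  have hbdd : BddBelow {s | p ≤ f s} :=
    ⟨t₀, fun s hs => le_of_not_gt fun hst => (hs.trans (f.mono hst.le)).not_gt ht₀⟩
  have hmem : p ≤ f (quantile f p) := by
    refine ge_of_tendsto ((f.right_continuous _).mono_left
      (nhdsWithin_mono _ Ioi_subset_Ici_self)) ?_
    filter_upwards [self_mem_nhdsWithin] with s hs
    obtain ⟨u, hu, hus⟩ := (csInf_lt_iff hbdd hhi).mp hs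
    exact hu.trans (f.mono hus.le)
  exact ⟨fun h => hmem.trans (f.mono h), fun h => csInf_le hbdd h⟩

section Quantile

variable (ν : Measure ℝ)

lemma quantile_cdf_le_iff {p : ℝ} (hp : p ∈ Ioo 0 1) (t : ℝ) :
    quantile (cdf ν) p ≤ t ↔ p ≤ cdf ν t :=
  (cdf ν).quantile_le_iff ((tendsto_cdf_atBot ν).eventually (eventually_lt_nhds hp.1)).exists
    (((tendsto_cdf_atTop ν).eventually (eventually_gt_nhds hp.2)).exists.imp fun _ => le_of_lt) t

lemma monotoneOn_quantile_cdf : MonotoneOn (quantile (cdf ν)) (Ioo 0 1) := fun _ hp _ hq hpq =>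
  (quantile_cdf_le_iff ν hp _).2 (hpq.trans ((quantile_cdf_le_iff ν hq _).1 le_rfl))

lemma aemeasurable_quantile_cdf : AEMeasurable (quantile (cdf ν)) (volume.restrict (Ioo 0 1)) :=
  aemeasurable_restrict_of_monotoneOn measurableSet_Ioo (monotoneOn_quantile_cdf ν)

theorem map_quantile_cdf [IsProbabilityMeasure ν] :
    (volume.restrict (Ioo 0 1)).map (quantile (cdf ν)) = ν := by
  refine (Measure.ext_of_Iic ν _ fun t => ?_).symm
  have hpre : quantile (cdf ν) ⁻¹' Iic t ∩ Ioo 0 1 = Iic (cdf ν t) ∩ Ioo 0 1 := by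
    ext p
    simp only [mem_inter_iff, mem_preimage, mem_Iic]
    exact and_congr_left (quantile_cdf_le_iff ν · t)
  rw [Measure.map_apply_of_aemeasurable (aemeasurable_quantile_cdf ν) measurableSet_Iic,
    Measure.restrict_apply' measurableSet_Ioo, hpre, ← Measure.restrict_apply' measurableSet_Ioo,
    Measure.restrict_congr_set Ioo_ae_eq_Ioc, Measure.restrict_apply' measurableSet_Ioc,
    inter_comm, Ioc_inter_Iic, min_eq_right (cdf_le_one ν t), Real.volume_Ioc, sub_zero,
    ofReal_cdf]

end Quantile

section RandomVariable

variable {Ω : Type*} [MeasurableSpace Ω] {μ : Measure Ω} [IsProbabilityMeasure μ] {X : Ω → ℝ}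

lemma cdf_map_apply (hX : AEMeasurable X μ) (t : ℝ) :
    cdf (μ.map X) t = (μ {ω | X ω ≤ t}).toReal := by
  have := Measure.isProbabilityMeasure_map hX
  rw [cdf_eq_real, Measure.real, Measure.map_apply_of_aemeasurable hX measurableSet_Iic]
  rfl

lemma integral_comp_eq_setIntegral_quantile (hX : AEMeasurable X μ) {g : ℝ → ℝ}
    (hg : AEStronglyMeasurable g (μ.map X)) :
    ∫ ω, g (X ω) ∂μ = ∫ p in Ioo 0 1, g (quantile (cdf (μ.map X)) p) := by
  have := Measure.isProbabilityMeasure_map hX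
  rw [← integral_map hX hg]
  conv_lhs => rw [← map_quantile_cdf (μ.map X)]
  exact integral_map (aemeasurable_quantile_cdf _) (by rwa [map_quantile_cdf])

lemma integrable_comp_iff_integrableOn_quantile (hX : AEMeasurable X μ) {g : ℝ → ℝ}
    (hg : AEStronglyMeasurable g (μ.map X)) :
    Integrable (fun ω => g (X ω)) μ ↔
      IntegrableOn (fun p => g (quantile (cdf (μ.map X)) p)) (Ioo 0 1) := by
  have := Measure.isProbabilityMeasure_map hX
  refine (integrable_map_measure hg hX).symm.trans ?_
  conv_lhs => rw [← map_quantile_cdf (μ.map X)]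
  exact integrable_map_measure (by rwa [map_quantile_cdf]) (aemeasurable_quantile_cdf _)

lemma integrableOn_quantile_cdf_map (hX : Integrable X μ) :
    IntegrableOn (quantile (cdf (μ.map X))) (Ioo 0 1) :=
  (integrable_comp_iff_integrableOn_quantile hX.aemeasurable aestronglyMeasurable_id).1 hX

lemma setIntegral_quantile_cdf_map_sub_integral (hX : Integrable X μ) :
    ∫ p in Ioo 0 1, (quantile (cdf (μ.map X)) p - ∫ ω, X ω ∂μ) = 0 := by
  rw [integral_sub (integrableOn_quantile_cdf_map hX) (integrable_const _), setIntegral_const,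
    integral_comp_eq_setIntegral_quantile (g := fun x => x) hX.aemeasurable
      aestronglyMeasurable_id]
  simp

end RandomVariable

/-- For integrable random variables, the dispersive order implies the
dilation order. -/
theorem stmt_4 {Ω : Type*} [MeasurableSpace Ω] (μ : Measure Ω)
    [IsProbabilityMeasure μ] (X Y : Ω → ℝ)
    (hX : Integrable X μ) (hY : Integrable Y μ)
    (hdisp : ∀ p q : ℝ, 0 < p → p ≤ q → q < 1 →
      quantile (fun t => (μ {ω | X ω ≤ t}).toReal) q -
        quantile (fun t => (μ {ω | X ω ≤ t}).toReal) p ≤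
      quantile (fun t => (μ {ω | Y ω ≤ t}).toReal) q -
        quantile (fun t => (μ {ω | Y ω ≤ t}).toReal) p) :
    ∀ φ : ℝ → ℝ, ConvexOn ℝ Set.univ φ →
      Integrable (fun ω => φ (X ω - ∫ ω', X ω' ∂μ)) μ →
      Integrable (fun ω => φ (Y ω - ∫ ω', Y ω' ∂μ)) μ →
      ∫ ω, φ (X ω - ∫ ω', X ω' ∂μ) ∂μ ≤ ∫ ω, φ (Y ω - ∫ ω', Y ω' ∂μ) ∂μ := by
  intro φ hφ hφX hφY
  simp only [← cdf_map_apply hX.aemeasurable, ← cdf_map_apply hY.aemeasurable] at hdisp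
  have hφm (m : ℝ) (ν : Measure ℝ) : AEStronglyMeasurable (fun x => φ (x - m)) ν :=
    ((continuousOn_univ.1 (hφ.continuousOn isOpen_univ)).comp
      (continuous_sub_right m)).aestronglyMeasurable
  rw [integral_comp_eq_setIntegral_quantile hX.aemeasurable (hφm _ _),
    integral_comp_eq_setIntegral_quantile hY.aemeasurable (hφm _ _)]
  refine hφ.setIntegral_comp_le_of_monotoneOn_sub measurableSet_Ioo
    (fun p hp q hq hpq => sub_le_sub_right (monotoneOn_quantile_cdf _ hp hq hpq) _)
    (fun p hp q hq hpq => ?_)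
    ((integrableOn_quantile_cdf_map hX).sub (integrableOn_const measure_Ioo_lt_top.ne))
    ((integrableOn_quantile_cdf_map hY).sub (integrableOn_const measure_Ioo_lt_top.ne))
    (by rw [setIntegral_quantile_cdf_map_sub_integral hX,
      setIntegral_quantile_cdf_map_sub_integral hY])
    ((integrable_comp_iff_integrableOn_quantile hX.aemeasurable (hφm _ _)).1 hφX)
    ((integrable_comp_iff_integrableOn_quantile hY.aemeasurable (hφm _ _)).1 hφY)
  have := hdisp p q hp.1 hpq hq.2
  simp only [Pi.sub_apply]
  linarith
end

section
/- Let F and G be cdf's of discrete distributions with finite supports, with identifying sequences (x_a, p_a)_{a∈A} and (y_b, q_b)_{b∈B} (support points x_a strictly increasing with probabilities p_a, similarly for G). Suppose the jump-height condition holds: q_b ≤ p_a whenever the open intervals (F(x_{a-1}), F(x_a)) and (G(y_{b-1}), G(y_b)) of cumulative probabilities intersect (with F(x_{a-1})=0 for a = min A). Then g(G⁻¹(p)) ≤ f(F⁻¹(p)) for all p ∈ (0,1), where f, g are the probability mass functions and F⁻¹, G⁻¹ are the left-continuous quantile functions; and conversely. -/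
/-- A purposive discrete distribution: support indexed by an interval of `ℤ`
with at least two elements, strictly increasing support points `x` and
positive probabilities `p` summing to one. -/
structure DiscDist where
  A : Set ℤ
  x : ℤ → ℝ
  p : ℤ → ℝ
  hA2 : ∃ a b, a ∈ A ∧ b ∈ A ∧ a ≠ b
  hAconn : ∀ a b c : ℤ, a ∈ A → c ∈ A → a ≤ b → b ≤ c → b ∈ A
  hmono : ∀ a b : ℤ, a ∈ A → b ∈ A → a < b → x a < x b
  hpos : ∀ a ∈ A, 0 < p a
  hzero : ∀ a ∉ A, p a = 0
  hsummable : Summable p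
  hsum : ∑' a, p a = 1

/-- Cumulative probability strictly below index `a`, i.e. `F(x_{a-1})`. -/
noncomputable def DiscDist.L (D : DiscDist) (a : ℤ) : ℝ :=
  ∑' i : ℤ, if i < a then D.p i else 0

/-- The relation `a ▷◁ b`: the jump intervals `(F(x_{a-1}), F(x_a))` and
`(G(y_{b-1}), G(y_b))` intersect. -/
def DRel (F G : DiscDist) (a b : ℤ) : Prop :=
  a ∈ F.A ∧ b ∈ G.A ∧
    max (F.L a) (G.L b) < min (F.L (a + 1)) (G.L (b + 1))

/-- The ∧-discrete dispersive order `F ≼_∧ G`. -/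
def discoA (F G : DiscDist) : Prop :=
  (∀ a b, DRel F G a b → G.p b ≤ F.p a) ∧
  (∀ a b, DRel F G a b → DRel F G (a - 1) (b - 1) →
    F.x a - F.x (a - 1) ≤ G.x b - G.x (b - 1))

/-- The ∨-discrete dispersive order `F ≼_∨ G`. -/
def discoO (F G : DiscDist) : Prop :=
  (∀ a b, DRel F G a b → G.p b ≤ F.p a) ∧
  (∀ a b, a ∈ F.A → a - 1 ∈ F.A → b ∈ G.A → b - 1 ∈ G.A →
    (DRel F G a b ∨ DRel F G (a - 1) (b - 1)) →
    F.x a - F.x (a - 1) ≤ G.x b - G.x (b - 1))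

/-- Cumulative distribution function of a discrete distribution. -/
noncomputable def DiscDist.cdf (D : DiscDist) (t : ℝ) : ℝ :=
  ∑' a : ℤ, if D.x a ≤ t then D.p a else 0

/-- Probability mass function of a discrete distribution. -/
noncomputable def DiscDist.pmf (D : DiscDist) (t : ℝ) : ℝ :=
  ∑' a : ℤ, if D.x a = t then D.p a else 0

namespace DiscDist

lemma pnonneg (D : DiscDist) (i : ℤ) : 0 ≤ D.p i := by
  by_cases h : i ∈ D.A
  · exact (D.hpos i h).le
  · exact (D.hzero i h).ge

lemma summable_ite (D : DiscDist) (s : ℤ → Prop) [DecidablePred s] :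
    Summable (fun i => if s i then D.p i else 0) := by
  refine Summable.of_nonneg_of_le (fun i => ?_) (fun i => ?_) D.hsummable
  · split
    · exact D.pnonneg i
    · exact le_rfl
  · split
    · exact le_rfl
    · exact D.pnonneg i

end DiscDist

namespace DiscDist

lemma L_mono (D : DiscDist) {a b : ℤ} (h : a ≤ b) : D.L a ≤ D.L b := by
  refine Summable.tsum_le_tsum (fun i => ?_) (D.summable_ite _) (D.summable_ite _)
  by_cases hi : i < a
  · simp [hi, hi.trans_le h]
  · rw [if_neg hi]
    split
    · exact D.pnonneg i
    · exact le_rfl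

lemma L_nonneg (D : DiscDist) (a : ℤ) : 0 ≤ D.L a := by
  refine tsum_nonneg (fun i => ?_)
  split
  · exact D.pnonneg i
  · exact le_rfl

lemma L_le_one (D : DiscDist) (a : ℤ) : D.L a ≤ 1 := by
  rw [← D.hsum]
  refine Summable.tsum_le_tsum (fun i => ?_) (D.summable_ite _) D.hsummable
  split
  · exact le_rfl
  · exact D.pnonneg i

lemma x_le_x_iff (D : DiscDist) {i a : ℤ} (hi : i ∈ D.A) (ha : a ∈ D.A) :
    D.x i ≤ D.x a ↔ i ≤ a := by
  constructor
  · intro h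
    by_contra hlt
    exact absurd (D.hmono a i ha hi (lt_of_not_ge hlt)) (not_lt.2 h)
  · intro h
    rcases h.lt_or_eq with h | h
    · exact (D.hmono i a hi ha h).le
    · subst h; exact le_rfl

lemma cdf_x (D : DiscDist) {a : ℤ} (ha : a ∈ D.A) : D.cdf (D.x a) = D.L (a + 1) := by
  unfold cdf L
  refine tsum_congr (fun i => ?_)
  by_cases hi : i ∈ D.A
  · have : D.x i ≤ D.x a ↔ i < a + 1 := by
      rw [D.x_le_x_iff hi ha, Int.lt_add_one_iff]
    by_cases h : i < a + 1
    · simp [this.2 h, h]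
    · have hx : ¬ D.x i ≤ D.x a := fun hc => h (this.1 hc)
      simp [hx, h]
  · simp [D.hzero i hi]

lemma pmf_x (D : DiscDist) {a : ℤ} (ha : a ∈ D.A) : D.pmf (D.x a) = D.p a := by
  unfold pmf
  rw [show (fun i => if D.x i = D.x a then D.p i else 0)
      = fun i => if i = a then D.p a else 0 from funext fun i => ?_, tsum_ite_eq]
  by_cases hi : i ∈ D.A
  · by_cases h : i = a
    · simp [h]
    · have : D.x i ≠ D.x a := by
        rcases lt_trichotomy i a with hlt | heq | hgt
        · exact (D.hmono i a hi ha hlt).ne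
        · exact absurd heq h
        · exact (D.hmono a i ha hi hgt).ne'
      simp [this, h]
  · have hp := D.hzero i hi
    have hne : i ≠ a := fun hc => hi (hc ▸ ha)
    simp [hp, hne]

lemma cdf_le_L (D : DiscDist) {a : ℤ} (ha : a ∈ D.A) {t : ℝ} (ht : t < D.x a) :
    D.cdf t ≤ D.L a := by
  refine Summable.tsum_le_tsum (fun i => ?_) (D.summable_ite _) (D.summable_ite _)
  by_cases hi : i ∈ D.A
  · by_cases h : i < a
    · split
      · exact le_rfl
      · simp [h, D.pnonneg i]
    · have : ¬ D.x i ≤ t := by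
        push_neg at h
        exact not_le.2 (ht.trans_le ((D.x_le_x_iff ha hi).2 h))
      simp [this, h, D.pnonneg i]
  · simp [D.hzero i hi]

lemma quantile_eq (D : DiscDist) {a : ℤ} (ha : a ∈ D.A) {p : ℝ}
    (h1 : D.L a < p) (h2 : p ≤ D.L (a + 1)) : quantile D.cdf p = D.x a := by
  have hmem : D.x a ∈ {t : ℝ | p ≤ D.cdf t} := by
    simpa [Set.mem_setOf_eq, D.cdf_x ha] using h2
  have hlb : ∀ t ∈ {t : ℝ | p ≤ D.cdf t}, D.x a ≤ t := by
    intro t ht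
    by_contra hc
    exact absurd (ht.trans (D.cdf_le_L ha (lt_of_not_ge hc))) (not_le.2 h1)
  exact le_antisymm (csInf_le ⟨D.x a, hlb⟩ hmem) (le_csInf ⟨D.x a, hmem⟩ hlb)

/-- Existence of the index bracketing `p`. -/
lemma exists_index (D : DiscDist) (hfin : D.A.Finite) {p : ℝ}
    (hp0 : 0 < p) (hp1 : p < 1) :
    ∃ a ∈ D.A, D.L a < p ∧ p ≤ D.L (a + 1) := by
  classical
  obtain ⟨a', b', ha', hb', _⟩ := D.hA2
  have hne : hfin.toFinset.Nonempty := ⟨a', hfin.mem_toFinset.2 ha'⟩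
  set a₀ := hfin.toFinset.min' hne with ha₀
  set a₁ := hfin.toFinset.max' hne with ha₁
  have ha₀A : a₀ ∈ D.A := hfin.mem_toFinset.1 (hfin.toFinset.min'_mem hne)
  have ha₁A : a₁ ∈ D.A := hfin.mem_toFinset.1 (hfin.toFinset.max'_mem hne)
  have hmin : ∀ i ∈ D.A, a₀ ≤ i := fun i hi =>
    hfin.toFinset.min'_le i (hfin.mem_toFinset.2 hi)
  have hmax : ∀ i ∈ D.A, i ≤ a₁ := fun i hi =>
    hfin.toFinset.le_max' i (hfin.mem_toFinset.2 hi)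
  have hL0 : D.L a₀ = 0 := by
    unfold L
    rw [show (fun i : ℤ => if i < a₀ then D.p i else 0) = fun _ => (0:ℝ)
        from funext fun i => ?_, tsum_zero]
    split
    · next h =>
      exact D.hzero i (fun hi => absurd (hmin i hi) (not_le.2 h))
    · rfl
  have hL1 : D.L (a₁ + 1) = 1 := by
    unfold L
    rw [show (fun i : ℤ => if i < a₁ + 1 then D.p i else 0) = D.p
        from funext fun i => ?_, D.hsum]
    split
    · rfl
    · next h =>
      exact (D.hzero i (fun hi => h (Int.lt_add_one_iff.2 (hmax i hi)))).symm
  set S := (Finset.Icc a₀ a₁).filter (fun a => D.L a < p) with hS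
  have hSne : S.Nonempty := by
    refine ⟨a₀, Finset.mem_filter.2 ⟨Finset.mem_Icc.2 ⟨le_rfl, hmin a₁ ha₁A⟩, ?_⟩⟩
    rw [hL0]; exact hp0
  set a := S.max' hSne with haS
  have haMem := S.max'_mem hSne
  rw [Finset.mem_filter, Finset.mem_Icc] at haMem
  obtain ⟨⟨h0a, ha1⟩, hLa⟩ := haMem
  refine ⟨a, D.hAconn a₀ a a₁ ha₀A ha₁A h0a ha1, hLa, ?_⟩
  by_cases hcase : a = a₁
  · rw [hcase, hL1]; exact hp1.le
  · have hlt : a < a₁ := lt_of_le_of_ne ha1 hcase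
    by_contra hc
    push_neg at hc
    have : a + 1 ∈ S := Finset.mem_filter.2
      ⟨Finset.mem_Icc.2 ⟨h0a.trans (by omega), by omega⟩, hc⟩
    have := S.le_max' _ this
    omega

end DiscDist

/-- For finitely supported discrete distributions, the jump-height condition
`q_b ≤ p_a` for all dispersion-relevant pairs is equivalent to
`g(G⁻¹(p)) ≤ f(F⁻¹(p))` for all `p ∈ (0,1)`. -/
theorem stmt_6 (F G : DiscDist) (hF : F.A.Finite) (hG : G.A.Finite) :
    (∀ a b, DRel F G a b → G.p b ≤ F.p a) ↔
    (∀ p ∈ Set.Ioo (0 : ℝ) 1,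
      G.pmf (quantile G.cdf p) ≤ F.pmf (quantile F.cdf p)) := by
  constructor
  · intro h p hp
    obtain ⟨a, haA, ha1, ha2⟩ := F.exists_index hF hp.1 hp.2
    obtain ⟨b, hbA, hb1, hb2⟩ := G.exists_index hG hp.1 hp.2
    rw [F.quantile_eq haA ha1 ha2, G.quantile_eq hbA hb1 hb2,
      F.pmf_x haA, G.pmf_x hbA]
    exact h a b ⟨haA, hbA, lt_of_lt_of_le (max_lt ha1 hb1) (le_min ha2 hb2)⟩
  · intro h a b ⟨haA, hbA, hlt⟩
    set p := (max (F.L a) (G.L b) + min (F.L (a+1)) (G.L (b+1))) / 2 with hp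
    have h1 : max (F.L a) (G.L b) < p := by rw [hp]; linarith
    have h2 : p < min (F.L (a+1)) (G.L (b+1)) := by rw [hp]; linarith
    have hp0 : 0 < p := lt_of_le_of_lt (le_max_left _ _ |>.trans' (F.L_nonneg a)) h1
    have hp1 : p < 1 := lt_of_lt_of_le h2 ((min_le_left _ _).trans (F.L_le_one _))
    have := h p ⟨hp0, hp1⟩
    rwa [F.quantile_eq haA (lt_of_le_of_lt (le_max_left _ _) h1)
        (h2.le.trans (min_le_left _ _)),
      G.quantile_eq hbA (lt_of_le_of_lt (le_max_right _ _) h1)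
        (h2.le.trans (min_le_right _ _)),
      F.pmf_x haA, G.pmf_x hbA] at this
end

section
/- The ∧-discrete dispersive order ≼_∧ is not transitive: there exist finitely supported discrete distributions F, G, H with F ≼_∧ G and G ≼_∧ H but F ⋠_∧ H. -/
/-!
`F` has atoms `0, 2` with masses `1/2, 1/2`, `G` has atoms `0, 2, 4` with masses `1/4, 1/2, 1/4`,
and `H` has atoms `0, 2, 3, 5` with mass `1/4` each. The short gap `2 → 3` of `H` sits between two
atoms whose jump intervals `(1/4, 1/2)` and `(1/2, 3/4)` both meet only the jump interval
`(1/4, 3/4)` of the middle atom of `G`, so no pair of consecutive atoms of `G` is matched with them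
and `G ≼_∧ H` never compares that gap. The jump intervals `(0, 1/2)` and `(1/2, 1)` of `F` do
match them (`0 ▷◁ 1` and `1 ▷◁ 2`), and the gap `2` of `F` exceeds the gap `1` of `H`.
-/

namespace DiscDist

noncomputable def ofIcc (n : ℤ) (hn : 0 < n) (x w : ℤ → ℝ) (hx : StrictMonoOn x (Set.Icc 0 n))
    (hw : ∀ a ∈ Set.Icc 0 n, 0 < w a) (hw1 : ∑ a ∈ Finset.Icc 0 n, w a = 1) : DiscDist where
  A := Set.Icc 0 n
  x := x
  p := (Set.Icc 0 n).indicator w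
  hA2 := ⟨0, n, by simp [hn.le], by simp [hn.le], hn.ne⟩
  hAconn _ _ _ ha hc hab hbc := ⟨ha.1.trans hab, hbc.trans hc.2⟩
  hmono _ _ ha hb hab := hx ha hb hab
  hpos a ha := by simpa [Set.indicator_of_mem ha] using hw a ha
  hzero _ ha := Set.indicator_of_notMem ha w
  hsummable := summable_of_ne_finset_zero (s := Finset.Icc 0 n) fun _ ha =>
    Set.indicator_of_notMem (by simpa using ha) w
  hsum := by
    rw [tsum_eq_sum (s := Finset.Icc 0 n) fun _ ha => Set.indicator_of_notMem (by simpa using ha) w,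
      ← hw1]
    exact Finset.sum_congr rfl fun _ ha => Set.indicator_of_mem (by simpa using ha) w

theorem L_eq_sum_filter (D : DiscDist) (s : Finset ℤ) (hs : ∀ a ∉ s, D.p a = 0) (a : ℤ) :
    D.L a = ∑ i ∈ s with i < a, D.p i := by
  rw [L, tsum_eq_sum (s := s) fun i hi => by simp [hs i hi], Finset.sum_filter]

section ofIcc

variable {n : ℤ} {hn : 0 < n} {x w : ℤ → ℝ} {hx : StrictMonoOn x (Set.Icc 0 n)}
  {hw : ∀ a ∈ Set.Icc 0 n, 0 < w a} {hw1 : ∑ a ∈ Finset.Icc 0 n, w a = 1}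

@[simp] theorem A_ofIcc : (ofIcc n hn x w hx hw hw1).A = Set.Icc 0 n := rfl

@[simp] theorem x_ofIcc : (ofIcc n hn x w hx hw hw1).x = x := rfl

theorem p_ofIcc_of_mem {a : ℤ} (ha : a ∈ Set.Icc 0 n) : (ofIcc n hn x w hx hw hw1).p a = w a :=
  Set.indicator_of_mem ha w

theorem L_ofIcc (a : ℤ) :
    (ofIcc n hn x w hx hw hw1).L a = ∑ i ∈ Finset.Icc 0 n with i < a, w i := by
  rw [L_eq_sum_filter _ (Finset.Icc 0 n) fun i hi => Set.indicator_of_notMem (by simpa using hi) w]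
  refine Finset.sum_congr rfl fun i hi => p_ofIcc_of_mem ?_
  simpa using (Finset.mem_filter.1 hi).1

end ofIcc

end DiscDist

open DiscDist

noncomputable def distF : DiscDist :=
  ofIcc 1 one_pos (fun a => 2 * a) (fun _ => 1 / 2)
    ((strictMono_int_of_lt_succ fun a => by push_cast; linarith).strictMonoOn _)
    (by norm_num) (by simp only [Finset.Icc_ofNat_ofNat]; norm_num)

noncomputable def distG : DiscDist :=
  ofIcc 2 two_pos (fun a => 2 * a) (fun a => if a = 1 then 1 / 2 else 1 / 4)
    ((strictMono_int_of_lt_succ fun a => by push_cast; linarith).strictMonoOn _)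
    (fun a _ => by positivity) (by simp only [Finset.Icc_ofNat_ofNat]; norm_num)

noncomputable def distH : DiscDist :=
  ofIcc 3 three_pos (fun a => 2 * a - if 2 ≤ a then 1 else 0) (fun _ => 1 / 4)
    ((strictMono_int_of_lt_succ fun a => by split_ifs <;> push_cast <;> linarith).strictMonoOn _)
    (by norm_num) (by simp only [Finset.Icc_ofNat_ofNat]; norm_num)

theorem discoA_distF_distG : discoA distF distG := by
  refine ⟨fun a b ⟨⟨ha0, ha1⟩, ⟨hb0, hb1⟩, hlt⟩ => ?_,
    fun a b ⟨⟨ha0, ha1⟩, ⟨hb0, hb1⟩, hlt⟩ ⟨_, _, hlt'⟩ => ?_⟩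
  · interval_cases a <;> interval_cases b <;>
      (simp only [distF, distG, L_ofIcc, Finset.Icc_ofNat_ofNat, Finset.sum_filter] at hlt
       revert hlt
       norm_num [distF, distG, p_ofIcc_of_mem, Finset.sum_insert])
  · interval_cases a <;> interval_cases b <;>
      (simp only [distF, distG, L_ofIcc, Finset.Icc_ofNat_ofNat, Finset.sum_filter] at hlt hlt'
       revert hlt hlt'
       norm_num [distF, distG, Finset.sum_insert])

theorem discoA_distG_distH : discoA distG distH := by
  refine ⟨fun a b ⟨⟨ha0, ha1⟩, ⟨hb0, hb1⟩, hlt⟩ => ?_,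
    fun a b ⟨⟨ha0, ha1⟩, ⟨hb0, hb1⟩, hlt⟩ ⟨_, _, hlt'⟩ => ?_⟩
  · interval_cases a <;> interval_cases b <;>
      (simp only [distG, distH, L_ofIcc, Finset.Icc_ofNat_ofNat, Finset.sum_filter] at hlt
       revert hlt
       norm_num [distG, distH, p_ofIcc_of_mem, Finset.sum_insert])
  · interval_cases a <;> interval_cases b <;>
      (simp only [distG, distH, L_ofIcc, Finset.Icc_ofNat_ofNat, Finset.sum_filter] at hlt hlt'
       revert hlt hlt'
       norm_num [distG, distH, Finset.sum_insert])

theorem not_discoA_distF_distH : ¬ discoA distF distH := by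
  have h12 : DRel distF distH 1 2 := by
    refine ⟨by simp [distF], by simp [distH], ?_⟩
    simp only [distF, distH, L_ofIcc, Finset.Icc_ofNat_ofNat, Finset.sum_filter]
    norm_num [Finset.sum_insert]
  have h01 : DRel distF distH (1 - 1) (2 - 1) := by
    refine ⟨by simp [distF], by simp [distH], ?_⟩
    simp only [distF, distH, L_ofIcc, Finset.Icc_ofNat_ofNat, Finset.sum_filter]
    norm_num [Finset.sum_insert]
  intro h
  have hgap := h.2 1 2 h12 h01
  norm_num [distF, distH] at hgap

/-- The ∧-discrete dispersive order is not transitive: there are finitely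
supported discrete distributions `F ≼_∧ G ≼_∧ H` with `F ⋠_∧ H`. -/
theorem stmt_8 : ∃ F G H : DiscDist,
    F.A.Finite ∧ G.A.Finite ∧ H.A.Finite ∧
    discoA F G ∧ discoA G H ∧ ¬ discoA F H :=
  ⟨distF, distG, distH, Set.finite_Icc 0 1, Set.finite_Icc 0 2, Set.finite_Icc 0 3,
    discoA_distF_distG, discoA_distG_distH, not_discoA_distF_distH⟩
end

section
/- Let X ~ Geom(π_F) and Y ~ Geom(π_G) with parameters of the form π_F = 1 - λ^ρ and π_G = 1 - λ for some 1/2 < λ < 1 and ρ ≥ log(2λ - 1)/log(λ) - 1. Then F ≼_∧ G, where F and G are the cdf's. Since these are lattice distributions with spacing 1, this amounts to: (1-λ)λ^{b-1} ≤ (1-λ^ρ)λ^{ρ(a-1)} for all pairs (a,b) ∈ ℕ × ℕ for which the intervals (1-λ^{ρ(a-1)}, 1-λ^{ρa}) and (1-λ^{b-1}, 1-λ^b) intersect. -/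
/-- For geometric distributions `F = Geom(1 - λ^ρ)` and `G = Geom(1 - λ)` with
`1/2 < λ < 1` and `ρ ≥ log(2λ-1)/log(λ) - 1`, we have `F ≼_∧ G`.  Since both
are lattice distributions with spacing `1`, this amounts to the jump-height
condition: `(1-λ)λ^{b-1} ≤ (1-λ^ρ)λ^{ρ(a-1)}` for every dispersion-relevant
pair `(a, b)`, i.e. whenever the intervals `(1-λ^{ρ(a-1)}, 1-λ^{ρa})` and
`(1-λ^{b-1}, 1-λ^b)` of cumulative probabilities intersect. -/
theorem stmt_19 (lam rho : ℝ) (hl : 1 / 2 < lam) (hl1 : lam < 1)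
    (hrho : Real.log (2 * lam - 1) / Real.log lam - 1 ≤ rho) :
    ∀ a b : ℕ, 1 ≤ a → 1 ≤ b →
      max (1 - lam ^ (rho * ((a : ℝ) - 1))) (1 - lam ^ (b - 1)) <
        min (1 - lam ^ (rho * (a : ℝ))) (1 - lam ^ b) →
      (1 - lam) * lam ^ (b - 1) ≤ (1 - lam ^ rho) * lam ^ (rho * ((a : ℝ) - 1)) := by
  intro a b ha hb hint
  have hl0 : (0:ℝ) < lam := by linarith
  have h2l : (0:ℝ) < 2 * lam - 1 := by linarith
  have hlog : Real.log lam < 0 := Real.log_neg hl0 hl1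
  -- key: lam ^ (rho + 1) ≤ 2 * lam - 1
  have hkey : lam ^ (rho + 1 : ℝ) ≤ 2 * lam - 1 := by
    have h1 : Real.log (2 * lam - 1) / Real.log lam ≤ rho + 1 := by linarith
    have h2 : (rho + 1) * Real.log lam ≤ Real.log (2 * lam - 1) := by
      have := (div_le_iff_of_neg hlog).mp h1
      linarith
    calc lam ^ (rho + 1 : ℝ) = Real.exp ((rho + 1) * Real.log lam) := by
          rw [Real.rpow_def_of_pos hl0]; ring_nf
      _ ≤ Real.exp (Real.log (2 * lam - 1)) := Real.exp_le_exp.mpr h2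
      _ = 2 * lam - 1 := Real.exp_log h2l
  -- from the interval intersection: rho * (a - 1) < b
  have hab : rho * ((a : ℝ) - 1) < (b : ℝ) := by
    have h1 : 1 - lam ^ (rho * ((a : ℝ) - 1)) < 1 - lam ^ b :=
      lt_of_le_of_lt (le_max_left _ _) (lt_of_lt_of_le hint (min_le_right _ _))
    have h2 : lam ^ ((b : ℝ)) < lam ^ (rho * ((a : ℝ) - 1)) := by
      rw [Real.rpow_natCast]; linarith
    exact (Real.rpow_lt_rpow_left_iff_of_base_lt_one hl0 hl1).mp h2
  -- hence λ^(b-1) ≤ λ^(ρ(a-1)-1)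
  have hb1 : ((b - 1 : ℕ) : ℝ) = (b : ℝ) - 1 := by
    push_cast [Nat.cast_sub hb]; ring
  have hmono : lam ^ (b - 1) ≤ lam ^ (rho * ((a : ℝ) - 1) - 1) := by
    have : lam ^ (((b : ℝ) - 1)) ≤ lam ^ (rho * ((a : ℝ) - 1) - 1) :=
      Real.rpow_le_rpow_of_exponent_ge hl0 (le_of_lt hl1) (by linarith)
    calc lam ^ (b - 1) = lam ^ (((b - 1 : ℕ) : ℝ)) := (Real.rpow_natCast _ _).symm
      _ = lam ^ (((b : ℝ) - 1)) := by rw [hb1]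
      _ ≤ _ := this
  have hsplit : lam ^ (rho * ((a : ℝ) - 1) - 1) =
      lam ^ (rho * ((a : ℝ) - 1)) / lam := by
    rw [Real.rpow_sub hl0, Real.rpow_one]
  have hpos : (0:ℝ) < lam ^ (rho * ((a : ℝ) - 1)) := Real.rpow_pos_of_pos hl0 _
  have hfrac : (1 - lam) / lam ≤ 1 - lam ^ (rho : ℝ) := by
    have hs : lam ^ (rho + 1 : ℝ) = lam ^ (rho : ℝ) * lam := by
      rw [Real.rpow_add hl0, Real.rpow_one]
    rw [div_le_iff₀ hl0]
    nlinarith [hkey]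
  have h1l : (0:ℝ) ≤ 1 - lam := by linarith
  calc (1 - lam) * lam ^ (b - 1)
      ≤ (1 - lam) * (lam ^ (rho * ((a : ℝ) - 1)) / lam) := by
        rw [← hsplit]; exact mul_le_mul_of_nonneg_left hmono h1l
    _ = ((1 - lam) / lam) * lam ^ (rho * ((a : ℝ) - 1)) := by ring
    _ ≤ (1 - lam ^ rho) * lam ^ (rho * ((a : ℝ) - 1)) :=
        mul_le_mul_of_nonneg_right hfrac (le_of_lt hpos)
end
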